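/- arXiv:0804.0427 — 2 statements merged into one kernel-verified Lean document; each statement's English description precedes it below -/
import Mathlib

section
/- Let N be a complete normal subgroup of an n-dimensional crystallographic group Γ, and let V = Span(N). Then Γ/N acts effectively as a discrete group of isometries of the Euclidean space E^n/V via (N(b+B))(V+x) = V + b + Bx. -/
/-
Since `N` is normal, the linear parts of `Γ` preserve `V = Span(N)` and hence `Vᗮ`, so on `Vᗮ`
the induced map is `x ↦ P b + B x` with `P` the orthogonal projection onto `Vᗮ`: an isometry.
If it is the identity then `P b = 0` and `B` fixes `Vᗮ`, i.e. `b + B` lies in the completion of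
`N`, which is `N`. For discreteness, the translations of `N` span `V` and so lie within a bounded
distance `R` of every vector of `V`; composing with such a translation, any `g ∈ Γ` carrying a
point of `K` to `K` modulo `V` becomes, up to `N`, an element carrying a point of the compact
`R`-thickening of `K` into it, and there are finitely many of those.
-/

noncomputable section

/-- Euclidean `n`-space. -/
abbrev E (n : ℕ) := EuclideanSpace ℝ (Fin n)

/-- An isometry `a + A` of `E n`, acting by `x ↦ a + A x`, with `A` a linear isometry
(an element of `O(n)`). -/
@[ext] structure Iso (n : ℕ) where
  a : E n
  A : E n ≃ₗᵢ[ℝ] E n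

namespace Iso

variable {n : ℕ}

instance : Mul (Iso n) := ⟨fun x y => ⟨x.a + x.A y.a, y.A.trans x.A⟩⟩
instance : One (Iso n) := ⟨⟨0, LinearIsometryEquiv.refl ℝ (E n)⟩⟩
instance : Inv (Iso n) := ⟨fun x => ⟨-(x.A.symm x.a), x.A.symm⟩⟩

@[simp] lemma mul_a (x y : Iso n) : (x * y).a = x.a + x.A y.a := rfl
@[simp] lemma mul_A (x y : Iso n) : (x * y).A = y.A.trans x.A := rfl
@[simp] lemma one_a : (1 : Iso n).a = 0 := rfl
@[simp] lemma one_A : (1 : Iso n).A = LinearIsometryEquiv.refl ℝ (E n) := rfl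
@[simp] lemma inv_a (x : Iso n) : (x⁻¹).a = -(x.A.symm x.a) := rfl
@[simp] lemma inv_A (x : Iso n) : (x⁻¹).A = x.A.symm := rfl

/-- The group of isometries of `E n`, with composition as multiplication. -/
instance : Group (Iso n) where
  mul_assoc x y z := by
    refine Iso.ext ?_ ?_
    · simp [add_assoc]
    · ext v; simp
  one_mul x := by refine Iso.ext ?_ ?_ <;> simp
  mul_one x := by refine Iso.ext ?_ ?_ <;> simp
  inv_mul_cancel x := by
    refine Iso.ext ?_ ?_
    · simp
    · ext v; simp

/-- The action of the isometry `a + A` on a point `x` of `E n`: `x ↦ a + A x`. -/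
def act (g : Iso n) (x : E n) : E n := g.a + g.A x

/-- The translation `a + I`. -/
def trans (a : E n) : Iso n := ⟨a, LinearIsometryEquiv.refl ℝ (E n)⟩

/-- `g` is a translation if its linear part is the identity. -/
def IsTranslation (g : Iso n) : Prop := g.A = LinearIsometryEquiv.refl ℝ (E n)

/-- The subgroup of all translations of `E n`. -/
def translations (n : ℕ) : Subgroup (Iso n) where
  carrier := {g | g.IsTranslation}
  mul_mem' := by
    intro x y hx hy
    simp only [Set.mem_setOf_eq, IsTranslation] at *
    rw [mul_A, hx, hy]; simp
  one_mem' := rfl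
  inv_mem' := by
    intro x hx
    simp only [Set.mem_setOf_eq, IsTranslation] at *
    rw [inv_A, hx]; rfl

/-- The set of translation vectors of a set `S` of isometries:
`{a : E n | a + I ∈ S}`. -/
def transVecs (S : Set (Iso n)) : Set (E n) := {a | Iso.trans a ∈ S}

/-- `Span(S)`: the real linear span of the translation vectors of `S`. -/
def spanS (S : Set (Iso n)) : Submodule ℝ (E n) :=
  Submodule.span ℝ (transVecs S)

/-- A crystallographic (space) group: a group of isometries of `E n` that acts
properly discontinuously (equivalently, is discrete) and cocompactly. -/
def IsCrystallographic (Γ : Subgroup (Iso n)) : Prop :=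
  (∀ K : Set (E n), IsCompact K →
      {g : Iso n | g ∈ Γ ∧ ((Iso.act g '' K) ∩ K).Nonempty}.Finite) ∧
  ∃ K : Set (E n), IsCompact K ∧ ∀ x : E n, ∃ g ∈ Γ, g.act x ∈ K

/-- `N` is a normal subgroup of `Γ`. -/
def IsNormalIn (N Γ : Subgroup (Iso n)) : Prop :=
  N ≤ Γ ∧ ∀ g ∈ Γ, ∀ x ∈ N, g * x * g⁻¹ ∈ N

/-- The completion of `S` in `Γ`:
`S̄ = {b+B ∈ Γ : b ∈ Span(S) and Span(S)ᗮ ⊆ Fix(B)}`. -/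
def completion (Γ : Subgroup (Iso n)) (S : Set (Iso n)) : Set (Iso n) :=
  {g | g ∈ Γ ∧ g.a ∈ spanS S ∧ ∀ x ∈ (spanS S)ᗮ, g.A x = x}

end Iso

/-- The isometry of `E n / V ≅ Vᗮ` induced by `g`, where `V = Span(N)`:
`V + x ↦ V + g.a + g.A x`, realized on `Vᗮ` via orthogonal projection. -/
noncomputable def quotAct {n : ℕ} (N : Subgroup (Iso n)) (g : Iso n) (x : E n) : E n :=
  (Submodule.orthogonalProjectionOnto (Iso.spanS (N : Set (Iso n)))ᗮ (g.act x) : E n)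

theorem AddSubgroup.exists_forall_mem_span_norm_sub_le {F : Type*} [NormedAddCommGroup F]
    [NormedSpace ℝ F] [FiniteDimensional ℝ F] (L : AddSubgroup F) :
    ∃ R : ℝ, ∀ v ∈ Submodule.span ℝ (L : Set F), ∃ ℓ ∈ L, ‖v - ℓ‖ ≤ R := by
  obtain ⟨s, hsL, hspan, hli⟩ := exists_linearIndependent ℝ (L : Set F)
  have hs : s.Finite := hli.setFinite
  refine ⟨∑ i ∈ hs.toFinset, ‖i‖, fun v hv => ?_⟩
  rw [← hspan, ← hs.coe_toFinset] at hv
  obtain ⟨c, -, rfl⟩ := Submodule.mem_span_finset.1 hv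
  refine ⟨∑ i ∈ hs.toFinset, (⌊c i⌋ : ℝ) • i, ?_, ?_⟩
  · refine AddSubgroup.sum_mem _ fun i hi => ?_
    rw [Int.cast_smul_eq_zsmul]
    exact AddSubgroup.zsmul_mem _ (hsL (hs.mem_toFinset.1 hi)) _
  · rw [← Finset.sum_sub_distrib]
    refine (norm_sum_le _ _).trans (Finset.sum_le_sum fun i _ => ?_)
    rw [← sub_smul, Int.self_sub_floor, norm_smul, Real.norm_of_nonneg (Int.fract_nonneg _)]
    exact mul_le_of_le_one_left (norm_nonneg i) (Int.fract_lt_one _).le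

@[simp] lemma LinearIsometryEquiv.refl_symm {R F : Type*} [Semiring R]
    [SeminormedAddCommGroup F] [Module R F] :
    (LinearIsometryEquiv.refl R F).symm = LinearIsometryEquiv.refl R F :=
  rfl

theorem LinearIsometryEquiv.apply_mem_orthogonal {𝕜 F : Type*} [RCLike 𝕜]
    [NormedAddCommGroup F] [InnerProductSpace 𝕜 F] {K : Submodule 𝕜 F} (f : F ≃ₗᵢ[𝕜] F)
    (hK : ∀ u ∈ K, f.symm u ∈ K) {v : F} (hv : v ∈ Kᗮ) : f v ∈ Kᗮ := by
  rw [Submodule.mem_orthogonal'] at hv ⊢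
  intro u hu
  rw [f.inner_map_eq_flip]
  exact hv _ (hK u hu)

namespace Iso

variable {n : ℕ}

def ActsProperlyDiscontinuously (Γ : Subgroup (Iso n)) : Prop :=
  ∀ K : Set (E n), IsCompact K → {g : Iso n | g ∈ Γ ∧ (g.act '' K ∩ K).Nonempty}.Finite

lemma IsCrystallographic.actsProperlyDiscontinuously {Γ : Subgroup (Iso n)}
    (hΓ : IsCrystallographic Γ) : ActsProperlyDiscontinuously Γ :=
  hΓ.1

lemma trans_mul (a b : E n) : trans a * trans b = trans (a + b) := by
  ext v <;> simp [trans]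

lemma trans_inv (a : E n) : (trans a)⁻¹ = trans (-a) := by
  ext v <;> simp [trans]

lemma mul_trans_mul_inv (g : Iso n) (a : E n) : g * trans a * g⁻¹ = trans (g.A a) := by
  ext v <;> simp [trans, add_assoc]

lemma act_trans_inv_mul (a : E n) (g : Iso n) (x : E n) :
    ((trans a)⁻¹ * g).act x = -a + g.act x := by
  simp [act, trans, add_assoc]

def transVecsAddSubgroup (N : Subgroup (Iso n)) : AddSubgroup (E n) where
  carrier := transVecs N
  add_mem' {a b} ha hb := by
    simpa [transVecs, trans_mul] using mul_mem (show trans a ∈ N from ha) hb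
  zero_mem' := one_mem N
  neg_mem' {a} ha := by
    simpa [transVecs, trans_inv] using inv_mem (show trans a ∈ N from ha)

variable {Γ N : Subgroup (Iso n)} {g : Iso n}

lemma A_apply_mem_spanS (hN : IsNormalIn N Γ) (hg : g ∈ Γ) {v : E n} (hv : v ∈ spanS N) :
    g.A v ∈ spanS N := by
  have hle : spanS N ≤ (spanS N).comap (g.A : E n →ₗ[ℝ] E n) :=
    Submodule.span_le.2 fun a ha => by
      have hconj := hN.2 g hg _ ha
      rw [mul_trans_mul_inv] at hconj
      exact Submodule.subset_span hconj
  exact hle hv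

lemma A_apply_mem_orthogonal_spanS (hN : IsNormalIn N Γ) (hg : g ∈ Γ) {v : E n}
    (hv : v ∈ (spanS N)ᗮ) : g.A v ∈ (spanS N)ᗮ :=
  g.A.apply_mem_orthogonal (fun _ hu => A_apply_mem_spanS hN (inv_mem hg) hu) hv

end Iso

open Iso

variable {n : ℕ} {Γ N : Subgroup (Iso n)} {g : Iso n}

lemma quotAct_eq_starProjection (N : Subgroup (Iso n)) (g : Iso n) (x : E n) :
    quotAct N g x = (spanS N)ᗮ.starProjection (g.act x) :=
  rfl

lemma quotAct_of_mem_orthogonal (hN : IsNormalIn N Γ) (hg : g ∈ Γ) {x : E n}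
    (hx : x ∈ (spanS N)ᗮ) : quotAct N g x = (spanS N)ᗮ.starProjection g.a + g.A x := by
  rw [quotAct_eq_starProjection, act, map_add,
    Submodule.starProjection_eq_self_iff.2 (A_apply_mem_orthogonal_spanS hN hg hx)]

lemma dist_quotAct (hN : IsNormalIn N Γ) (hg : g ∈ Γ) {x y : E n} (hx : x ∈ (spanS N)ᗮ)
    (hy : y ∈ (spanS N)ᗮ) : dist (quotAct N g x) (quotAct N g y) = dist x y := by
  rw [quotAct_of_mem_orthogonal hN hg hx, quotAct_of_mem_orthogonal hN hg hy, dist_add_left,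
    g.A.dist_map]

lemma mem_completion_of_quotAct_eq_self (hN : IsNormalIn N Γ) (hg : g ∈ Γ)
    (hfix : ∀ x ∈ (spanS N)ᗮ, quotAct N g x = x) : g ∈ completion Γ N := by
  have hfix' : ∀ x ∈ (spanS N)ᗮ, (spanS N)ᗮ.starProjection g.a + g.A x = x := fun x hx =>
    quotAct_of_mem_orthogonal hN hg hx ▸ hfix x hx
  have ha : (spanS N)ᗮ.starProjection g.a = 0 := by
    simpa using hfix' 0 (zero_mem _)
  refine ⟨hg, ?_, fun x hx => by simpa [ha] using hfix' x hx⟩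
  rwa [Submodule.starProjection_apply_eq_zero_iff, Submodule.orthogonal_orthogonal] at ha

lemma exists_dist_act_trans_inv_mul_quotAct_le (N : Subgroup (Iso n)) :
    ∃ R : ℝ, ∀ (g : Iso n) (x : E n),
      ∃ ℓ, trans ℓ ∈ N ∧ dist (((trans ℓ)⁻¹ * g).act x) (quotAct N g x) ≤ R := by
  obtain ⟨R, hR⟩ := (transVecsAddSubgroup N).exists_forall_mem_span_norm_sub_le
  refine ⟨R, fun g x => ?_⟩
  have hV : (spanS N).starProjection (g.act x) ∈ spanS N := Submodule.coe_mem _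
  obtain ⟨ℓ, hℓ, hdist⟩ := hR _ hV
  refine ⟨ℓ, hℓ, ?_⟩
  rwa [act_trans_inv_mul, quotAct_eq_starProjection, Submodule.starProjection_orthogonal_val,
    dist_eq_norm, neg_add_eq_sub, sub_sub_sub_cancel_left]

lemma exists_finset_of_quotAct_image_inter_nonempty (hΓ : ActsProperlyDiscontinuously Γ)
    (hN : IsNormalIn N Γ) {K : Set (E n)} (hK : IsCompact K) :
    ∃ F : Finset (Iso n), ∀ g ∈ Γ,
      ((quotAct N g '' K) ∩ K).Nonempty → ∃ f ∈ F, f⁻¹ * g ∈ N := by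
  obtain ⟨R, hR⟩ := exists_dist_act_trans_inv_mul_quotAct_le N
  have hfin := hΓ _ (hK.cthickening (r := R))
  refine ⟨hfin.toFinset, fun g hg => ?_⟩
  rintro ⟨_, ⟨x, hxK, rfl⟩, hgxK⟩
  obtain ⟨ℓ, hℓ, hdist⟩ := hR g x
  refine ⟨(trans ℓ)⁻¹ * g, hfin.mem_toFinset.2 ⟨mul_mem (inv_mem (hN.1 hℓ)) hg, ?_⟩, ?_⟩
  · exact ⟨_, ⟨x, Metric.self_subset_cthickening K hxK, rfl⟩,
      Metric.mem_cthickening_of_dist_le _ _ R K hgxK hdist⟩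
  · simpa [mul_assoc] using hN.2 g⁻¹ (inv_mem hg) _ hℓ

/-- If `N` is a complete normal subgroup of a crystallographic group `Γ`
and `V = Span(N)`, then `Γ/N` acts effectively as a discrete group of isometries of the
Euclidean space `E n / V ≅ Vᗮ` via `(N(b+B))(V+x) = V + b + Bx`: the action is by
isometries, its kernel is exactly `N` (effectiveness of `Γ/N`), and it is properly
discontinuous modulo `N` (discreteness of `Γ/N`). -/
theorem stmt6 {n : ℕ} (Γ N : Subgroup (Iso n)) (hΓ : Iso.IsCrystallographic Γ)
    (hN : Iso.IsNormalIn N Γ)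
    (hcomplete : Iso.completion Γ (N : Set (Iso n)) = (N : Set (Iso n))) :
    (∀ g ∈ Γ, ∀ x ∈ (Iso.spanS (N : Set (Iso n)))ᗮ, ∀ y ∈ (Iso.spanS (N : Set (Iso n)))ᗮ,
        dist (quotAct N g x) (quotAct N g y) = dist x y) ∧
    (∀ g ∈ Γ, (∀ x ∈ (Iso.spanS (N : Set (Iso n)))ᗮ, quotAct N g x = x) → g ∈ N) ∧
    (∀ K : Set (E n), IsCompact K →
        K ⊆ ((Iso.spanS (N : Set (Iso n)))ᗮ : Set (E n)) →
        ∃ F : Finset (Iso n), ∀ g ∈ Γ,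
          ((quotAct N g '' K) ∩ K).Nonempty → ∃ f ∈ F, f⁻¹ * g ∈ N) :=
  ⟨fun _ hg _ hx _ hy => dist_quotAct hN hg hx hy,
    fun _ hg hfix => hcomplete.subset (mem_completion_of_quotAct_eq_self hN hg hfix),
    fun _ hK _ => exists_finset_of_quotAct_image_inter_nonempty
      hΓ.actsProperlyDiscontinuously hN hK⟩
end
end

section
/- Let Γ be an n-dimensional crystallographic group with point group Π and first Betti number β₁. Then the kernel N of the transfer homomorphism tr : Γ → T equals {b+B ∈ Γ : b ∈ Fix(Π)⊥}, it is the unique normal subgroup of Γ with Γ/N free abelian of rank β₁, and Span(N) = Fix(Π)⊥ while Span(Z(Γ)) = Fix(Π), so N and Z(Γ) are orthogonal complete normal subgroups. -/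
noncomputable section

/-- The fixed subspace `Fix(P) = {x : A x = x for all A ∈ P}`. -/
def fixSubmodule {n : ℕ} (P : Finset (E n ≃ₗᵢ[ℝ] E n)) : Submodule ℝ (E n) where
  carrier := {x | ∀ A ∈ P, A x = x}
  add_mem' := by
    intro x y hx hy A hA
    simp only [map_add, hx A hA, hy A hA]
  zero_mem' := by intro A hA; simp
  smul_mem' := by
    intro c x hx A hA
    simp only [map_smul, hx A hA]

/-!
Averaging over the point group `P` drives the geometric half. Since right multiplication by
an element of `P` permutes `P`, the transfer is a homomorphism and `S v = Σ_{A∈P} A v` lies in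
`Fix(P)`; pairing with `Fix(P)` gives `S v = 0 ↔ v ∈ Fix(P)ᗮ`. Cocompactness puts every point
within bounded distance of the translation lattice `L`, so `L` spans `E^n`; as `S` and
`|P| • id - S` map `L` into `L ∩ Fix(P)` and `L ∩ Fix(P)ᗮ` and are onto `Fix(P)` and `Fix(P)ᗮ`,
these intersections span the two subspaces. A central element fixes `L`, hence is a translation,
and it commutes with `Γ` exactly when its vector lies in `Fix(P)`.

For the algebraic half, `ker tr` is the set of elements that are torsion in `Γ^ab`: the transfer
lands in a torsion-free group, and if `tr g = 0` then some `g^m` is a translation by `c` with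
`S c = 0`, so `|P| c = Σ_{A∈P} (c - A c)` is a product of commutators `[⟨a, A⟩, c]`. Any
surjection `G × ℤ^β₁ → ℤ^β₁` has the torsion subgroup as kernel, because `ℤ^β₁` is Hopfian; this
gives both the existence and the uniqueness of `N`.
-/

namespace Iso

variable {n : ℕ}

@[simp] lemma trans_a (v : E n) : (trans v).a = v := rfl
@[simp] lemma trans_A (v : E n) : (trans v).A = LinearIsometryEquiv.refl ℝ (E n) := rfl

lemma trans_add (u v : E n) : trans (u + v) = trans u * trans v :=
  Iso.ext (by simp) (by ext; simp)

lemma trans_zero : trans (0 : E n) = 1 := rfl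

lemma trans_neg (v : E n) : trans (-v) = (trans v)⁻¹ :=
  eq_inv_of_mul_eq_one_left (by rw [← trans_add, neg_add_cancel, trans_zero])

lemma trans_nsmul (k : ℕ) (v : E n) : trans (k • v) = trans v ^ k := by
  induction k with
  | zero => simp [trans_zero]
  | succ k ih => rw [succ_nsmul, trans_add, ih, pow_succ]

lemma eq_trans_of_A_eq_refl {g : Iso n} (hg : g.A = LinearIsometryEquiv.refl ℝ (E n)) :
    g = trans g.a :=
  Iso.ext rfl hg

lemma conj_trans (g : Iso n) (v : E n) : g * trans v * g⁻¹ = trans (g.A v) :=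
  Iso.ext (by simp) (by ext; simp)

def linearPart : Iso n →* (E n ≃ₗᵢ[ℝ] E n) where
  toFun g := g.A
  map_one' := rfl
  map_mul' _ _ := rfl

@[simp] lemma linearPart_apply (g : Iso n) : linearPart g = g.A := rfl

lemma act_mul (g h : Iso n) (x : E n) : (g * h).act x = g.act (h.act x) := by
  simp [act, add_assoc]

lemma act_inv_act (g : Iso n) (x : E n) : g⁻¹.act (g.act x) = x := by
  rw [← act_mul, inv_mul_cancel]; simp [act]

lemma dist_act_act (g : Iso n) (x y : E n) : dist (g.act x) (g.act y) = dist x y := by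
  simp [act]

end Iso

section Averaging

variable {n : ℕ}

def pointSum (P : Finset (E n ≃ₗᵢ[ℝ] E n)) : E n →ₗ[ℝ] E n :=
  ∑ A ∈ P, (A.toLinearEquiv : E n →ₗ[ℝ] E n)

lemma pointSum_apply (P : Finset (E n ≃ₗᵢ[ℝ] E n)) (v : E n) :
    pointSum P v = ∑ A ∈ P, A v := by
  simp [pointSum, LinearMap.sum_apply]

variable {P : Finset (E n ≃ₗᵢ[ℝ] E n)}

lemma pointSum_of_mem_fixSubmodule {x : E n} (hx : x ∈ fixSubmodule P) :
    pointSum P x = P.card • x := by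
  rw [pointSum_apply, Finset.sum_congr rfl hx, Finset.sum_const]

lemma eq_refl_iff_forall_mem_orthogonal {A : E n ≃ₗᵢ[ℝ] E n} (hA : A ∈ P) :
    A = LinearIsometryEquiv.refl ℝ (E n) ↔ ∀ x ∈ (fixSubmodule P)ᗮ, A x = x := by
  refine ⟨fun h x _ => by simp [h], fun h => LinearIsometryEquiv.ext fun x => ?_⟩
  obtain ⟨y, hy, z, hz, rfl⟩ := (fixSubmodule P).exists_add_mem_mem_orthogonal x
  simp [hy A hA, h z hz]

variable {H : Subgroup (E n ≃ₗᵢ[ℝ] E n)} (hPH : ∀ A, A ∈ P ↔ A ∈ H)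
include hPH

lemma pointSum_apply_of_mem {B : E n ≃ₗᵢ[ℝ] E n} (hB : B ∈ H) (v : E n) :
    pointSum P (B v) = pointSum P v := by
  simp only [pointSum_apply]
  exact Finset.sum_equiv (Equiv.mulRight B) (fun A => by simp [hPH, H.mul_mem_cancel_right hB])
    (fun A _ => rfl)

lemma apply_pointSum_of_mem {B : E n ≃ₗᵢ[ℝ] E n} (hB : B ∈ H) (v : E n) :
    B (pointSum P v) = pointSum P v := by
  simp only [pointSum_apply, map_sum]
  exact Finset.sum_equiv (Equiv.mulLeft B) (fun A => by simp [hPH, H.mul_mem_cancel_left hB])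
    (fun A _ => rfl)

lemma pointSum_mem_fixSubmodule (v : E n) : pointSum P v ∈ fixSubmodule P :=
  fun B hB => apply_pointSum_of_mem hPH ((hPH B).1 hB) v

lemma inner_pointSum_of_mem_fixSubmodule (v : E n) {y : E n} (hy : y ∈ fixSubmodule P) :
    inner ℝ (pointSum P v) y = P.card * inner ℝ v y := by
  have hA : ∀ A ∈ P, inner ℝ (A v) y = inner ℝ v y := fun A hA => by
    conv_lhs => rw [← A.apply_symm_apply y]
    rw [A.inner_map_map, hy A.symm ((hPH _).2 (H.inv_mem ((hPH A).1 hA)))]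
  rw [pointSum_apply, sum_inner, Finset.sum_congr rfl hA, Finset.sum_const, nsmul_eq_mul]

lemma pointSum_eq_zero_iff (v : E n) : pointSum P v = 0 ↔ v ∈ (fixSubmodule P)ᗮ := by
  have hcard : (P.card : ℝ) ≠ 0 := by
    exact_mod_cast (Finset.card_pos.2 ⟨1, (hPH 1).2 H.one_mem⟩).ne'
  constructor
  · intro h
    refine (Submodule.mem_orthogonal' _ _).2 fun y hy => ?_
    have := inner_pointSum_of_mem_fixSubmodule hPH v hy
    rw [h, inner_zero_left] at this
    exact (mul_eq_zero.1 this.symm).resolve_left hcard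
  · intro h
    have hS := pointSum_mem_fixSubmodule hPH v
    rw [← inner_self_eq_zero (𝕜 := ℝ), inner_pointSum_of_mem_fixSubmodule hPH v hS,
      (Submodule.mem_orthogonal' _ _).1 h _ hS, mul_zero]

lemma pointSum_card_nsmul_sub_pointSum (v : E n) :
    pointSum P (P.card • v - pointSum P v) = 0 := by
  rw [map_sub, map_nsmul, pointSum_of_mem_fixSubmodule (pointSum_mem_fixSubmodule hPH v),
    sub_self]

end Averaging

lemma Submodule.eq_top_of_forall_exists_dist_le {F : Type*} [NormedAddCommGroup F]
    [InnerProductSpace ℝ F] (W : Submodule ℝ F) [W.HasOrthogonalProjection] {C : ℝ}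
    (h : ∀ x, ∃ w ∈ W, dist x w ≤ C) : W = ⊤ := by
  by_contra hW
  obtain ⟨u, hu, hu0⟩ := Submodule.exists_mem_ne_zero_of_ne_bot (mt W.orthogonal_eq_bot_iff.1 hW)
  set x := ((|C| + 1) / ‖u‖) • u
  have hx : ‖x‖ = |C| + 1 := by
    rw [norm_smul, Real.norm_of_nonneg (by positivity), div_mul_cancel₀ _ (norm_ne_zero_iff.2 hu0)]
  obtain ⟨w, hw, hxw⟩ := h x
  have hpyth := norm_sub_sq_eq_norm_sq_add_norm_sq_real
    (W.inner_left_of_mem_orthogonal hw (Wᗮ.smul_mem _ hu) : inner ℝ x w = 0)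
  have hxw' : ‖x‖ ≤ ‖x - w‖ :=
    (mul_self_le_mul_self_iff (norm_nonneg _) (norm_nonneg _)).2 (by nlinarith [norm_nonneg w])
  rw [dist_eq_norm] at hxw
  linarith [le_abs_self C]

lemma LinearMap.range_le_span_of_mapsTo {R M N : Type*} [Semiring R] [AddCommMonoid M]
    [AddCommMonoid N] [Module R M] [Module R N] {S : Set M} (hS : Submodule.span R S = ⊤)
    (T : M →ₗ[R] N) {X : Set N} (hT : Set.MapsTo T S X) :
    LinearMap.range T ≤ Submodule.span R X := by
  rw [LinearMap.range_eq_map, ← hS, Submodule.map_span]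
  exact Submodule.span_mono (Set.image_subset_iff.2 hT)

section TorsionKernel

variable {A G : Type*} [AddCommGroup A] [AddCommGroup G] [Finite G] {β : ℕ}

lemma AddMonoidHom.ker_eq_torsion_of_surjective (e : A ≃+ G × (Fin β → ℤ))
    {F : A →+ (Fin β → ℤ)} (hF : Function.Surjective F) : F.ker = AddCommGroup.torsion A := by
  -- `F` kills the finite factor, so it factors through a surjective, hence injective,
  -- endomorphism `ψ` of `ℤ^β`.
  let ψ : (Fin β → ℤ) →+ (Fin β → ℤ) :=
    (F.comp e.symm.toAddMonoidHom).comp (AddMonoidHom.inr G _)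
  have htors : ∀ a : G, e.symm (a, 0) ∈ AddCommGroup.torsion A := fun a =>
    e.symm.toAddMonoidHom.isOfFinAddOrder <|
      (AddMonoidHom.inl G (Fin β → ℤ)).isOfFinAddOrder (isOfFinAddOrder_of_finite a)
  have hψ : ∀ x, F x = ψ (e x).2 := fun x => by
    have hx : x = e.symm ((e x).1, 0) + e.symm (0, (e x).2) := by
      rw [← map_add, Prod.mk_add_mk, add_zero, zero_add, e.symm_apply_apply]
    rw [hx, map_add, (F.isOfFinAddOrder (htors _)).eq_zero', zero_add]
    simp [ψ]
  have hψinj : Function.Injective ψ :=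
    OrzechProperty.injective_of_surjective_endomorphism ψ.toIntLinearMap fun y => by
      obtain ⟨x, rfl⟩ := hF y
      exact ⟨(e x).2, (hψ x).symm⟩
  ext x
  refine ⟨fun hx => ?_, fun hx => (F.isOfFinAddOrder hx).eq_zero'⟩
  have h2 : (e x).2 = 0 := hψinj (by rw [← hψ, map_zero]; exact hx)
  have : x = e.symm ((e x).1, 0) := by rw [← h2, e.symm_apply_apply]
  rw [this]
  exact htors _

end TorsionKernel

section FreeAbelianQuotient

variable {Γ G : Type*} [Group Γ] [AddCommGroup G] {β : ℕ}

lemma Abelianization.of_surjective : Function.Surjective (Abelianization.of (G := Γ)) :=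
  QuotientGroup.mk_surjective

lemma MonoidHom.eq_one_iff_isOfFinOrder_of_surjective [Finite G]
    (e : Additive (Abelianization Γ) ≃+ G × (Fin β → ℤ)) {f : Γ →* Multiplicative (Fin β → ℤ)}
    (hf : Function.Surjective f) (g : Γ) : f g = 1 ↔ IsOfFinOrder (Abelianization.of g) := by
  let F := MonoidHom.toAdditiveLeft (Abelianization.lift f)
  have hF : ∀ g, F (Additive.ofMul (Abelianization.of g)) = (f g).toAdd := fun _ => rfl
  have hFs : Function.Surjective F := fun y => by
    obtain ⟨g, hg⟩ := hf (Multiplicative.ofAdd y)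
    exact ⟨_, (hF g).trans (congrArg Multiplicative.toAdd hg)⟩
  rw [← isOfFinAddOrder_ofMul_iff, ← AddCommGroup.mem_torsion,
    ← F.ker_eq_torsion_of_surjective e hFs, AddMonoidHom.mem_ker, hF, toAdd_eq_zero]

lemma exists_surjective_monoidHom_of_addEquiv
    (e : Additive (Abelianization Γ) ≃+ G × (Fin β → ℤ)) :
    ∃ f : Γ →* Multiplicative (Fin β → ℤ), Function.Surjective f := by
  refine ⟨(AddMonoidHom.toMultiplicativeRight ((AddMonoidHom.snd _ _).comp e.toAddMonoidHom)).comp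
    Abelianization.of, fun y => ?_⟩
  obtain ⟨g, hg⟩ := Abelianization.of_surjective (Additive.toMul (e.symm (0, y.toAdd)))
  refine ⟨g, ?_⟩
  simp [hg]

end FreeAbelianQuotient

namespace Iso

open scoped commutatorElement

variable {n : ℕ} {Γ : Subgroup (Iso n)} {P : Finset (E n ≃ₗᵢ[ℝ] E n)}

variable (Γ P) in
def IsPointGroup : Prop := ∀ A, A ∈ P ↔ ∃ a : E n, (⟨a, A⟩ : Iso n) ∈ Γ

lemma IsPointGroup.mem_iff (hP : IsPointGroup Γ P) (A : E n ≃ₗᵢ[ℝ] E n) :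
    A ∈ P ↔ A ∈ Γ.map linearPart := by
  rw [hP A, Subgroup.mem_map]
  exact ⟨fun ⟨a, ha⟩ => ⟨_, ha, rfl⟩, fun ⟨g, hg, hgA⟩ => ⟨g.a, by subst hgA; exact hg⟩⟩

lemma IsPointGroup.A_mem (hP : IsPointGroup Γ P) {g : Iso n} (hg : g ∈ Γ) : g.A ∈ P :=
  (hP.mem_iff _).2 ⟨g, hg, rfl⟩

lemma IsPointGroup.card_pos (hP : IsPointGroup Γ P) : 0 < P.card :=
  Finset.card_pos.2 ⟨_, (hP.mem_iff _).2 (Subgroup.one_mem _)⟩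

variable (Γ) in
def translationVectors : AddSubgroup (E n) where
  carrier := {v | trans v ∈ Γ}
  add_mem' {u v} hu hv := show trans (u + v) ∈ Γ by rw [trans_add]; exact Γ.mul_mem hu hv
  zero_mem' := Γ.one_mem
  neg_mem' {v} hv := show trans (-v) ∈ Γ by rw [trans_neg]; exact Γ.inv_mem hv

lemma mem_translationVectors {v : E n} : v ∈ translationVectors Γ ↔ trans v ∈ Γ := Iff.rfl

lemma a_mem_translationVectors {g : Iso n} (hg : g ∈ Γ)
    (hgA : g.A = LinearIsometryEquiv.refl ℝ (E n)) : g.a ∈ translationVectors Γ := by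
  rwa [mem_translationVectors, ← eq_trans_of_A_eq_refl hgA]

lemma A_apply_mem_translationVectors {g : Iso n} (hg : g ∈ Γ) {v : E n}
    (hv : v ∈ translationVectors Γ) : g.A v ∈ translationVectors Γ := by
  rw [mem_translationVectors, ← conj_trans]
  exact Γ.mul_mem (Γ.mul_mem hg hv) (Γ.inv_mem hg)

lemma exists_dist_translationVectors_le (hP : IsPointGroup Γ P) {K : Set (E n)}
    (hK : IsCompact K) (hcover : ∀ x, ∃ g ∈ Γ, g.act x ∈ K) :
    ∃ C, ∀ x : E n, ∃ v ∈ translationVectors Γ, dist x v ≤ C := by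
  obtain ⟨CK, hCK⟩ := hK.isBounded.exists_norm_le
  choose! r hr using fun A hA => (hP A).1 hA
  refine ⟨CK + ∑ A ∈ P, ‖r A‖, fun x => ?_⟩
  obtain ⟨g, hg, hgx⟩ := hcover x
  set h : Iso n := ⟨r g.A, g.A⟩
  have hh : h ∈ Γ := hr _ (hP.A_mem hg)
  -- `g⁻¹ * h ∈ Γ` is the translation by `g⁻¹.act (r g.A)`
  refine ⟨g⁻¹.act (r g.A), a_mem_translationVectors (Γ.mul_mem (Γ.inv_mem hg) hh)
    (by ext; simp [h]), ?_⟩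
  calc dist x (g⁻¹.act (r g.A)) = dist (g.act x) (r g.A) := by
        rw [← dist_act_act g⁻¹ (g.act x), act_inv_act]
    _ ≤ ‖g.act x‖ + ‖r g.A‖ := dist_le_norm_add_norm _ _
    _ ≤ CK + ∑ A ∈ P, ‖r A‖ :=
        add_le_add (hCK _ hgx) (Finset.single_le_sum (fun _ _ => norm_nonneg _) (hP.A_mem hg))

lemma span_translationVectors (hΓ : IsCrystallographic Γ) (hP : IsPointGroup Γ P) :
    Submodule.span ℝ (translationVectors Γ : Set (E n)) = ⊤ := by
  obtain ⟨K, hK, hcover⟩ := hΓ.2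
  obtain ⟨C, hC⟩ := exists_dist_translationVectors_le hP hK hcover
  exact Submodule.eq_top_of_forall_exists_dist_le _ fun x =>
    (hC x).imp fun _ hv => ⟨Submodule.subset_span hv.1, hv.2⟩

lemma IsPointGroup.apply_mem_translationVectors (hP : IsPointGroup Γ P)
    {A : E n ≃ₗᵢ[ℝ] E n} (hA : A ∈ P) {v : E n} (hv : v ∈ translationVectors Γ) :
    A v ∈ translationVectors Γ := by
  obtain ⟨a, ha⟩ := (hP A).1 hA
  exact A_apply_mem_translationVectors ha hv

lemma IsPointGroup.pointSum_mem_translationVectors (hP : IsPointGroup Γ P) {v : E n}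
    (hv : v ∈ translationVectors Γ) : pointSum P v ∈ translationVectors Γ := by
  rw [pointSum_apply]
  exact sum_mem fun A hA => hP.apply_mem_translationVectors hA hv

lemma span_translationVectors_inter_fixSubmodule (hΓ : IsCrystallographic Γ)
    (hP : IsPointGroup Γ P) :
    Submodule.span ℝ ((translationVectors Γ : Set (E n)) ∩ fixSubmodule P) = fixSubmodule P := by
  refine le_antisymm (Submodule.span_le.2 Set.inter_subset_right) fun x hx => ?_
  have hrange := (pointSum P).range_le_span_of_mapsTo (span_translationVectors hΓ hP)
    (X := (translationVectors Γ : Set (E n)) ∩ fixSubmodule P) fun v hv =>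
      ⟨hP.pointSum_mem_translationVectors hv, pointSum_mem_fixSubmodule hP.mem_iff v⟩
  have hcard : (P.card : ℝ) ≠ 0 := by exact_mod_cast hP.card_pos.ne'
  refine (Submodule.smul_mem_iff _ hcard).1 (hrange ⟨x, ?_⟩)
  rw [pointSum_of_mem_fixSubmodule hx, Nat.cast_smul_eq_nsmul]

lemma span_translationVectors_inter_orthogonal (hΓ : IsCrystallographic Γ)
    (hP : IsPointGroup Γ P) :
    Submodule.span ℝ ((translationVectors Γ : Set (E n)) ∩ (fixSubmodule P)ᗮ) =
      (fixSubmodule P)ᗮ := by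
  refine le_antisymm (Submodule.span_le.2 Set.inter_subset_right) fun x hx => ?_
  let T : E n →ₗ[ℝ] E n := P.card • LinearMap.id - pointSum P
  have hT : ∀ v, T v = P.card • v - pointSum P v := fun _ => rfl
  have hrange := T.range_le_span_of_mapsTo (span_translationVectors hΓ hP)
    (X := (translationVectors Γ : Set (E n)) ∩ (fixSubmodule P)ᗮ) fun v hv =>
      ⟨hT v ▸ sub_mem (nsmul_mem hv _) (hP.pointSum_mem_translationVectors hv),
        hT v ▸ (pointSum_eq_zero_iff hP.mem_iff _).1
          (pointSum_card_nsmul_sub_pointSum hP.mem_iff v)⟩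
  have hcard : (P.card : ℝ) ≠ 0 := by exact_mod_cast hP.card_pos.ne'
  refine (Submodule.smul_mem_iff _ hcard).1 (hrange ⟨x, ?_⟩)
  rw [hT, (pointSum_eq_zero_iff hP.mem_iff x).2 hx, sub_zero, Nat.cast_smul_eq_nsmul]

lemma A_eq_refl_of_mem_centralizer (hΓ : IsCrystallographic Γ) (hP : IsPointGroup Γ P)
    {g : Iso n} (hg : g ∈ Subgroup.centralizer (Γ : Set (Iso n))) :
    g.A = LinearIsometryEquiv.refl ℝ (E n) := by
  have hfix : Submodule.span ℝ (translationVectors Γ : Set (E n)) ≤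
      LinearMap.eqLocus (g.A : E n →ₗ[ℝ] E n) LinearMap.id := Submodule.span_le.2 fun v hv => by
    have hconj : g * trans v * g⁻¹ = trans v := by
      rw [← Subgroup.mem_centralizer_iff.1 hg _ hv, mul_inv_cancel_right]
    rw [conj_trans] at hconj
    exact congrArg Iso.a hconj
  rw [span_translationVectors hΓ hP, top_le_iff] at hfix
  exact LinearIsometryEquiv.ext fun x =>
    congrFun (congrArg (⇑) (LinearMap.eqLocus_eq_top.1 hfix)) x

lemma mem_centralizer_inf_iff (hΓ : IsCrystallographic Γ) (hP : IsPointGroup Γ P) {g : Iso n} :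
    g ∈ Subgroup.centralizer (Γ : Set (Iso n)) ⊓ Γ ↔
      g ∈ Γ ∧ g.A = LinearIsometryEquiv.refl ℝ (E n) ∧ g.a ∈ fixSubmodule P := by
  rw [Subgroup.mem_inf, Subgroup.mem_centralizer_iff]
  constructor
  · rintro ⟨hcomm, hg⟩
    have hgA := A_eq_refl_of_mem_centralizer hΓ hP (Subgroup.mem_centralizer_iff.2 hcomm)
    refine ⟨hg, hgA, fun A hA => ?_⟩
    obtain ⟨a, ha⟩ := (hP A).1 hA
    simpa [hgA, add_comm] using congrArg Iso.a (hcomm _ ha)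
  · rintro ⟨hg, hgA, hfix⟩
    exact ⟨fun h hh => Iso.ext (by simp [hgA, hfix h.A (hP.A_mem hh), add_comm])
      (by ext; simp [hgA]), hg⟩

lemma spanS_centralizer_inf (hΓ : IsCrystallographic Γ) (hP : IsPointGroup Γ P) :
    spanS ((Subgroup.centralizer (Γ : Set (Iso n)) ⊓ Γ : Subgroup (Iso n)) : Set (Iso n)) =
      fixSubmodule P := by
  rw [← span_translationVectors_inter_fixSubmodule hΓ hP, spanS]
  congr 1
  ext v
  show trans v ∈ Subgroup.centralizer (Γ : Set (Iso n)) ⊓ Γ ↔ trans v ∈ Γ ∧ v ∈ fixSubmodule P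
  simp [mem_centralizer_inf_iff hΓ hP]

lemma completion_centralizer_inf (hΓ : IsCrystallographic Γ) (hP : IsPointGroup Γ P) :
    completion Γ ((Subgroup.centralizer (Γ : Set (Iso n)) ⊓ Γ : Subgroup (Iso n)) : Set (Iso n)) =
      ((Subgroup.centralizer (Γ : Set (Iso n)) ⊓ Γ : Subgroup (Iso n)) : Set (Iso n)) := by
  ext g
  simp only [completion, spanS_centralizer_inf hΓ hP, Set.mem_ofPred_eq, SetLike.mem_coe,
    mem_centralizer_inf_iff hΓ hP]
  constructor
  · rintro ⟨hg, ha, hA⟩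
    exact ⟨hg, (eq_refl_iff_forall_mem_orthogonal (hP.A_mem hg)).2 hA, ha⟩
  · rintro ⟨hg, hA, ha⟩
    exact ⟨hg, ha, (eq_refl_iff_forall_mem_orthogonal (hP.A_mem hg)).1 hA⟩

def transfer (hP : IsPointGroup Γ P) : Γ →* Multiplicative (E n) where
  toFun g := .ofAdd (pointSum P (g : Iso n).a)
  map_one' := by simp
  map_mul' g h := by
    rw [← ofAdd_add]
    change Multiplicative.ofAdd (pointSum P ((g : Iso n).a + (g : Iso n).A (h : Iso n).a)) = _
    rw [map_add, pointSum_apply_of_mem hP.mem_iff ((hP.mem_iff _).1 (hP.A_mem g.2))]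

lemma transfer_eq_one_iff (hP : IsPointGroup Γ P) (g : Γ) :
    transfer hP g = 1 ↔ pointSum P (g : Iso n).a = 0 :=
  ofAdd_eq_one

def transferKer (hP : IsPointGroup Γ P) : Subgroup (Iso n) :=
  (transfer hP).ker.map Γ.subtype

lemma mem_transferKer (hP : IsPointGroup Γ P) {g : Iso n} :
    g ∈ transferKer hP ↔ g ∈ Γ ∧ pointSum P g.a = 0 := by
  simp only [transferKer, Subgroup.mem_map, MonoidHom.mem_ker, transfer_eq_one_iff]
  exact ⟨fun ⟨h, hh, hg⟩ => hg ▸ ⟨h.2, hh⟩, fun ⟨hg, h0⟩ => ⟨⟨g, hg⟩, h0, rfl⟩⟩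

lemma coe_transferKer (hP : IsPointGroup Γ P) :
    (transferKer hP : Set (Iso n)) = {g : Iso n | g ∈ Γ ∧ ∑ A ∈ P, A g.a = 0} := by
  ext g
  simp [mem_transferKer, pointSum_apply]

lemma transferKer_isNormalIn (hP : IsPointGroup Γ P) : IsNormalIn (transferKer hP) Γ := by
  refine ⟨fun g hg => ((mem_transferKer hP).1 hg).1, fun g hg x hx => ?_⟩
  obtain ⟨y, hy, rfl⟩ := hx
  have hconj := (transfer hP).normal_ker.conj_mem y hy ⟨g, hg⟩
  exact ⟨_, hconj, rfl⟩

lemma spanS_transferKer (hΓ : IsCrystallographic Γ) (hP : IsPointGroup Γ P) :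
    spanS (transferKer hP : Set (Iso n)) = (fixSubmodule P)ᗮ := by
  rw [← span_translationVectors_inter_orthogonal hΓ hP, spanS]
  congr 1
  ext v
  show trans v ∈ transferKer hP ↔ trans v ∈ Γ ∧ v ∈ (fixSubmodule P)ᗮ
  rw [mem_transferKer, trans_a, pointSum_eq_zero_iff hP.mem_iff]

lemma completion_transferKer (hΓ : IsCrystallographic Γ) (hP : IsPointGroup Γ P) :
    completion Γ (transferKer hP : Set (Iso n)) = transferKer hP := by
  ext g
  simp only [completion, spanS_transferKer hΓ hP, Submodule.orthogonal_orthogonal,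
    Set.mem_ofPred_eq, SetLike.mem_coe, mem_transferKer, pointSum_eq_zero_iff hP.mem_iff]
  exact ⟨fun ⟨hg, ha, _⟩ => ⟨hg, ha⟩, fun ⟨hg, ha⟩ => ⟨hg, ha, fun x hx => hx _ (hP.A_mem hg)⟩⟩

lemma A_apply_sub_mem_translationVectors_commutator {g : Iso n} (hg : g ∈ Γ) {v : E n}
    (hv : v ∈ translationVectors Γ) :
    g.A v - v ∈ translationVectors ((commutator Γ).map Γ.subtype) :=
  ⟨⁅⟨g, hg⟩, ⟨trans v, hv⟩⁆, Subgroup.commutator_mem_commutator (Subgroup.mem_top _)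
    (Subgroup.mem_top _), by
      rw [commutatorElement_def]
      simp only [Subgroup.subtype_apply, Subgroup.coe_mul, Subgroup.coe_inv, conj_trans,
        sub_eq_add_neg, trans_add, trans_neg]⟩

lemma card_nsmul_mem_translationVectors_commutator (hP : IsPointGroup Γ P) {v : E n}
    (hv : v ∈ translationVectors Γ) (h0 : pointSum P v = 0) :
    P.card • v ∈ translationVectors ((commutator Γ).map Γ.subtype) := by
  have hsum : P.card • v = -∑ A ∈ P, (A v - v) := by
    rw [Finset.sum_sub_distrib, ← pointSum_apply, h0, Finset.sum_const, zero_sub, neg_neg]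
  rw [hsum]
  refine neg_mem (sum_mem fun A hA => ?_)
  obtain ⟨a, ha⟩ := (hP A).1 hA
  exact A_apply_sub_mem_translationVectors_commutator ha hv

lemma exists_pow_A_eq_refl (hP : IsPointGroup Γ P) {g : Iso n} (hg : g ∈ Γ) :
    ∃ m, 0 < m ∧ (g ^ m).A = LinearIsometryEquiv.refl ℝ (E n) := by
  have : Finite (Γ.map linearPart) :=
    (P.finite_toSet.subset fun A hA => (hP.mem_iff A).2 hA).to_subtype
  obtain ⟨m, hm, hpow⟩ := (isOfFinOrder_of_finite
    (⟨linearPart g, Subgroup.mem_map_of_mem _ hg⟩ : Γ.map linearPart)).exists_pow_eq_one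
  refine ⟨m, hm, ?_⟩
  rw [← linearPart_apply, map_pow]
  exact congrArg Subtype.val hpow

lemma isOfFinOrder_of_iff_mem_transferKer (hP : IsPointGroup Γ P) (g : Γ) :
    IsOfFinOrder (Abelianization.of g) ↔ (g : Iso n) ∈ transferKer hP := by
  rw [mem_transferKer, ← transfer_eq_one_iff hP]
  refine ⟨fun h => ⟨g.2, ?_⟩, fun ⟨_, h0⟩ => ?_⟩
  · have := IsAddTorsionFree.of_isTorsionFree ℝ (E n)
    rw [← Abelianization.lift_apply_of (transfer hP)]
    exact ((Abelianization.lift (transfer hP)).isOfFinOrder h).eq_one'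
  obtain ⟨m, hm, hgm⟩ := exists_pow_A_eq_refl hP g.2
  rw [← Subgroup.coe_pow] at hgm
  have hc0 : pointSum P ((g ^ m : Γ) : Iso n).a = 0 :=
    (transfer_eq_one_iff hP _).1 (by rw [map_pow, h0, one_pow])
  have hcomm := card_nsmul_mem_translationVectors_commutator hP
    (a_mem_translationVectors (g ^ m).2 hgm) hc0
  rw [mem_translationVectors, trans_nsmul, ← eq_trans_of_A_eq_refl hgm, ← Subgroup.coe_pow,
    ← pow_mul] at hcomm
  replace hcomm :=
    (Subgroup.mem_map_iff_mem (x := g ^ (m * P.card)) Γ.subtype_injective).1 hcomm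
  refine isOfFinOrder_iff_pow_eq_one.2 ⟨m * P.card, Nat.mul_pos hm hP.card_pos, ?_⟩
  rwa [← map_pow, ← MonoidHom.mem_ker, Abelianization.ker_of]

end Iso

/-- Let `Γ` be an `n`-dimensional crystallographic group with point
group `P` and first Betti number `β₁`. The kernel `N` of the transfer `tr : Γ → T`,
`tr(b+B) = (Σ_{A∈P} A) b + I` -- i.e. `{g ∈ Γ : Σ_{A∈P} A g.a = 0}` -- equals
`{b+B ∈ Γ : b ∈ Fix(P)ᗮ}`; it is the unique normal subgroup of `Γ` with `Γ/N` free
abelian of rank `β₁`; `Span(N) = Fix(P)ᗮ` while `Span(Z(Γ)) = Fix(P)`, so `N` and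
`Z(Γ)` are orthogonal complete normal subgroups. -/
theorem stmt15 {n : ℕ} (Γ : Subgroup (Iso n)) (hΓ : Iso.IsCrystallographic Γ)
    (P : Finset (E n ≃ₗᵢ[ℝ] E n))
    (hP : ∀ A : E n ≃ₗᵢ[ℝ] E n, A ∈ P ↔ ∃ a : E n, (⟨a, A⟩ : Iso n) ∈ Γ)
    (G : Type) [AddCommGroup G] [Finite G] (β₁ : ℕ)
    (hab : Nonempty (Additive (Abelianization ↥Γ) ≃+ (G × (Fin β₁ → ℤ)))) :
    ({g : Iso n | g ∈ Γ ∧ ∑ A ∈ P, A g.a = 0}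
        = {g : Iso n | g ∈ Γ ∧ g.a ∈ (fixSubmodule P)ᗮ}) ∧
    ∃ N : Subgroup (Iso n),
      (N : Set (Iso n)) = {g : Iso n | g ∈ Γ ∧ ∑ A ∈ P, A g.a = 0} ∧
      Iso.IsNormalIn N Γ ∧
      (∃ f : ↥Γ →* Multiplicative (Fin β₁ → ℤ),
        Function.Surjective f ∧ ∀ g : ↥Γ, f g = 1 ↔ (g : Iso n) ∈ N) ∧
      (∀ M : Subgroup (Iso n), Iso.IsNormalIn M Γ →
        (∃ f : ↥Γ →* Multiplicative (Fin β₁ → ℤ),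
          Function.Surjective f ∧ ∀ g : ↥Γ, f g = 1 ↔ (g : Iso n) ∈ M) → M = N) ∧
      Iso.spanS (N : Set (Iso n)) = (fixSubmodule P)ᗮ ∧
      Iso.spanS ((Subgroup.centralizer (Γ : Set (Iso n)) ⊓ Γ : Subgroup (Iso n)) : Set (Iso n))
        = fixSubmodule P ∧
      Iso.completion Γ (N : Set (Iso n)) = (N : Set (Iso n)) ∧
      Iso.completion Γ ((Subgroup.centralizer (Γ : Set (Iso n)) ⊓ Γ : Subgroup (Iso n)) : Set (Iso n))
        = ((Subgroup.centralizer (Γ : Set (Iso n)) ⊓ Γ : Subgroup (Iso n)) : Set (Iso n)) := by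
  obtain ⟨e⟩ := hab
  have hP' : Iso.IsPointGroup Γ P := hP
  have hker (f : Γ →* Multiplicative (Fin β₁ → ℤ)) (hf : Function.Surjective f) (g : Γ) :
      f g = 1 ↔ (g : Iso n) ∈ Iso.transferKer hP' :=
    (f.eq_one_iff_isOfFinOrder_of_surjective e hf g).trans
      (Iso.isOfFinOrder_of_iff_mem_transferKer hP' g)
  refine ⟨?_, Iso.transferKer hP', Iso.coe_transferKer hP', Iso.transferKer_isNormalIn hP', ?_,
    ?_, Iso.spanS_transferKer hΓ hP', Iso.spanS_centralizer_inf hΓ hP',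
    Iso.completion_transferKer hΓ hP', Iso.completion_centralizer_inf hΓ hP'⟩
  · ext g
    simp [← pointSum_apply, pointSum_eq_zero_iff hP'.mem_iff]
  · obtain ⟨f, hf⟩ := exists_surjective_monoidHom_of_addEquiv e
    exact ⟨f, hf, hker f hf⟩
  · rintro M ⟨hMΓ, -⟩ ⟨f, hf, hfM⟩
    ext x
    refine ⟨fun hx => (hker f hf ⟨x, hMΓ hx⟩).1 ((hfM _).2 hx), fun hx => ?_⟩
    exact (hfM ⟨x, ((Iso.mem_transferKer hP').1 hx).1⟩).1 ((hker f hf _).2 hx)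
end
end
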